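/- arXiv:2508.09379 — 3 statements merged into one kernel-verified Lean document; each statement's English description precedes it below -/
import Mathlib

section
/- Let R be a commutative ring, A an Azumaya algebra over R, and M an R-module. For every A-bimodule homomorphism ψ : A → A ⊗[R] M there exists a unique m ∈ M such that ψ(a) = a ⊗ m for all a ∈ A; equivalently, ψ = id_A ⊗ φ where φ : R → M is the R-linear map r ↦ r • m. -/
open TensorProduct MulOpposite

/-- The canonical map `A ⊗[R] Aᵐᵒᵖ → End_R(A)`, sending `a ⊗ b` to `x ↦ a * x * b.unop`. -/
noncomputable def mulLeftRight (R A : Type*) [CommRing R] [Ring A] [Algebra R A] :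
    A ⊗[R] Aᵐᵒᵖ →ₗ[R] (A →ₗ[R] A) :=
  TensorProduct.lift <| LinearMap.mk₂ R
    (fun a b => (LinearMap.mulLeft R a).comp (LinearMap.mulRight R b.unop))
    (fun a₁ a₂ b => by ext x; simp [add_mul])
    (fun r a b => by ext x; simp [smul_mul_assoc])
    (fun a b₁ b₂ => by ext x; simp [mul_add])
    (fun r a b => by ext x; simp [mul_smul_comm])

/-- `A` is an Azumaya algebra over the commutative ring `R`: it is a faithful finitely
generated projective `R`-module and `A ⊗[R] Aᵐᵒᵖ → End_R(A)`, `a ⊗ b ↦ (x ↦ a·x·b)`,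
is bijective. -/
structure IsAzumayaAlg (R A : Type*) [CommRing R] [Ring A] [Algebra R A] : Prop where
  finite : Module.Finite R A
  projective : Module.Projective R A
  faithful : FaithfulSMul R A
  bij : Function.Bijective (mulLeftRight R A)

/-!
A bimodule map `ψ` is `a ↦ a • z` for `z = ψ 1`, and `z` is central: `a • z = z • a`.
Nakayama's lemma, applied to the faithful finitely generated projective module `A` and the ideal
`{t 1 | t : A →ₗ[R] R}`, gives a functional `t` with `t 1 = 1`. By the Azumaya property the
endomorphism `x ↦ t x • 1` is `x ↦ ∑ aᵢ x bᵢ`; tensored with `M` it sends the central `z` to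
`(∑ aᵢ bᵢ) • z = t 1 • z = z`, and it takes values in `1 ⊗ M`. Applying `t ⊗ id` to `1 ⊗ m`
recovers `m`, which gives uniqueness.
-/

theorem Ideal.eq_top_of_top_le_smul_top {R M : Type*} [CommRing R] [AddCommGroup M] [Module R M]
    [Module.Finite R M] [FaithfulSMul R M] {I : Ideal R}
    (h : (⊤ : Submodule R M) ≤ I • ⊤) : I = ⊤ := by
  obtain ⟨r, hr, hrM⟩ :=
    Submodule.exists_sub_one_mem_and_smul_eq_zero_of_fg_of_le_smul I ⊤ Module.Finite.fg_top h
  obtain rfl : r = 0 :=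
    FaithfulSMul.eq_of_smul_eq_smul (α := M) fun m => by rw [hrM m trivial, zero_smul]
  exact I.eq_top_of_isUnit_mem hr (by simp)

theorem Module.Projective.top_le_range_eval_one_smul_top (R A : Type*) [CommRing R] [Ring A]
    [Algebra R A] [Module.Projective R A] :
    (⊤ : Submodule R A) ≤ LinearMap.range (Module.Dual.eval R A 1) • ⊤ := by
  intro x _
  obtain ⟨s, hs⟩ := Module.projective_def.mp ‹Module.Projective R A›
  rw [← hs x, Finsupp.linearCombination_apply]
  refine Submodule.finsuppSum_mem _ _ _ _ fun p _ => Submodule.smul_mem_smul ?_ trivial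
  exact ⟨Finsupp.lapply p ∘ₗ s ∘ₗ LinearMap.mulRight R x, by simp⟩

theorem exists_dual_apply_one_eq_one (R A : Type*) [CommRing R] [Ring A] [Algebra R A]
    [Module.Finite R A] [Module.Projective R A] [FaithfulSMul R A] :
    ∃ t : Module.Dual R A, t 1 = 1 := by
  have h := Ideal.eq_top_of_top_le_smul_top (Module.Projective.top_le_range_eval_one_smul_top R A)
  exact (LinearMap.range_eq_top.mp h) 1

section CentralTensor

variable {R A M : Type*} [CommRing R] [Ring A] [Algebra R A] [AddCommGroup M] [Module R M]

theorem rTensor_mulLeftRight_apply_of_central {z : A ⊗[R] M} (hz : ∀ a : A, op a • z = a • z)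
    (e : A ⊗[R] Aᵐᵒᵖ) : (mulLeftRight R A e).rTensor M z = mulLeftRight R A e 1 • z := by
  induction e using TensorProduct.induction_on with
  | zero => simp
  | tmul u v =>
    rw [show mulLeftRight R A (u ⊗ₜ v) = .mulLeft R u ∘ₗ .mulRight R v.unop from rfl,
      LinearMap.rTensor_comp]
    -- the two `A`-actions on `A ⊗[R] M` are, by definition, `rTensor` of multiplication maps
    change u • op v.unop • z = (u * (1 * v.unop)) • z
    rw [hz, one_mul, mul_smul]
  | add e e' he he' =>
    simp only [map_add, LinearMap.rTensor_add, LinearMap.add_apply, he, he', add_smul]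

theorem rTensor_algebraLinearMap_comp_apply (t : Module.Dual R A) (w : A ⊗[R] M) :
    (Algebra.linearMap R A ∘ₗ t).rTensor M w =
      (1 : A) ⊗ₜ TensorProduct.lid R M (t.rTensor M w) := by
  induction w using TensorProduct.induction_on with
  | zero => simp
  | tmul x m => simp [Algebra.algebraMap_eq_smul_one, TensorProduct.smul_tmul]
  | add w w' hw hw' => simp only [map_add, hw, hw', tmul_add]

variable {t : Module.Dual R A}

theorem one_tmul_injective (ht : t 1 = 1) : Function.Injective fun m : M => (1 : A) ⊗ₜ[R] m :=
  Function.LeftInverse.injective (g := fun w => TensorProduct.lid R M (t.rTensor M w))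
    fun m => by simp [ht]

theorem eq_one_tmul_of_central (hA : Function.Surjective (mulLeftRight R A)) (ht : t 1 = 1)
    {z : A ⊗[R] M} (hz : ∀ a : A, op a • z = a • z) :
    z = (1 : A) ⊗ₜ TensorProduct.lid R M (t.rTensor M z) := by
  obtain ⟨e, he⟩ := hA (Algebra.linearMap R A ∘ₗ t)
  have := rTensor_mulLeftRight_apply_of_central hz e
  rw [he, rTensor_algebraLinearMap_comp_apply] at this
  simpa [ht] using this.symm

end CentralTensor

/-- Every `A`-bimodule homomorphism `ψ : A → A ⊗[R] M` (an additive map commuting with the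
left and right `A`-actions) is of the form `a ↦ a ⊗ m` for a unique `m ∈ M`; equivalently
`ψ = id_A ⊗ φ` where `φ : R → M` is the `R`-linear map `r ↦ r • m`. -/
theorem stmt4 (R : Type*) [CommRing R] (A : Type*) [Ring A] [Algebra R A]
    (hA : IsAzumayaAlg R A) (M : Type*) [AddCommGroup M] [Module R M]
    (ψ : A →+ A ⊗[R] M)
    (hl : ∀ a x : A, ψ (a * x) = a • ψ x)
    (hr : ∀ a x : A, ψ (x * a) = op a • ψ x) :
    ∃! m : M, ∀ a : A, ψ a = a ⊗ₜ[R] m := by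
  have := hA.finite
  have := hA.projective
  have := hA.faithful
  obtain ⟨t, ht⟩ := exists_dual_apply_one_eq_one R A
  have hψ : ∀ a, ψ a = a • ψ 1 := fun a => by rw [← hl, mul_one]
  have hcentral : ∀ a : A, op a • ψ 1 = a • ψ 1 := fun a => by rw [← hr, ← hl, one_mul, mul_one]
  obtain ⟨m, hm⟩ : ∃ m : M, ψ 1 = 1 ⊗ₜ m := ⟨_, eq_one_tmul_of_central hA.bij.2 ht hcentral⟩
  refine ⟨m, fun a => ?_, fun m' hm' => one_tmul_injective ht ((hm' 1).symm.trans hm)⟩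
  rw [hψ, hm, smul_tmul', smul_eq_mul, mul_one]
end

section
/- Let R be a commutative ring, A an Azumaya algebra over R, and M an R-module. There exists an isomorphism of A-bimodules A ≅ A ⊗[R] M if and only if M is isomorphic to R as an R-module. -/
open TensorProduct MulOpposite

/-!
Call the elements `x` of the `A`-bimodule `A ⊗[R] M` with `a • x = x • a` for all `a` its center.
Since `A ⊗[R] Aᵐᵒᵖ → End_R(A)` is onto, every `R`-linear `F : A → A` acts on a central `x` by
`(F ⊗ id) x = F 1 • x`. Because the trace ideal of the faithful finitely generated projective
`R`-module `A` is all of `R`, there is an `R`-linear `τ : A → R` with `τ 1 = 1`; taking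
`F = τ(-) • 1` shows that `m ↦ 1 ⊗ m` maps `M` isomorphically onto the center of `A ⊗[R] M`.
A bimodule isomorphism `A ⊗[R] R ≅ A ≅ A ⊗[R] M` restricts to the centers, so `R ≅ M`.
-/

namespace Module

variable {R P : Type*} [CommRing R] [AddCommGroup P] [Module R P]

theorem exists_sum_dual_apply_eq_one [Module.Finite R P] [Projective R P] [FaithfulSMul R P] :
    ∃ (s : Finset (Dual R P)) (x : Dual R P → P), ∑ f ∈ s, f (x f) = 1 := by
  -- `I` is the trace ideal; a dual basis gives `P = I • P`, and then Nakayama and faithfulness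
  -- force `1 ∈ I`.
  set I : Ideal R := ⨆ f : Dual R P, LinearMap.range f
  have hI : (⊤ : Submodule R P) ≤ I • ⊤ := by
    classical
    obtain ⟨n, F, G, -, -, hFG⟩ := Finite.exists_comp_eq_id_of_projective R P
    intro a _
    have ha : a = ∑ i, G a i • F (Pi.single i 1) := by
      conv_lhs => rw [← LinearMap.id_apply (R := R) a, ← hFG, LinearMap.comp_apply,
        pi_eq_sum_univ' (G a), map_sum]
      simp only [map_smul]
    rw [ha]
    exact Submodule.sum_mem _ fun i _ => Submodule.smul_mem_smul
      (le_iSup (fun f : Dual R P => LinearMap.range f) (LinearMap.proj i ∘ₗ G) ⟨a, rfl⟩) trivial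
  obtain ⟨r, hr1, hr0⟩ :=
    Submodule.exists_sub_one_mem_and_smul_eq_zero_of_fg_of_le_smul I ⊤ Finite.fg_top hI
  have hr : r = 0 := FaithfulSMul.eq_of_smul_eq_smul fun a => by rw [hr0 a trivial, zero_smul]
  have h1 : (1 : R) ∈ I := by simpa [hr] using I.neg_mem hr1
  obtain ⟨c, hc, hsum⟩ := (Submodule.mem_iSup_iff_exists_finsupp _ _).mp h1
  choose x hx using hc
  rw [Finsupp.sum] at hsum
  exact ⟨c.support, x, by simpa [hx] using hsum⟩

end Module

theorem exists_linearMap_apply_one_eq_one (R A : Type*) [CommRing R] [Ring A] [Algebra R A]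
    [Module.Finite R A] [Module.Projective R A] [FaithfulSMul R A] :
    ∃ τ : A →ₗ[R] R, τ 1 = 1 := by
  obtain ⟨s, x, hs⟩ := Module.exists_sum_dual_apply_eq_one (R := R) (P := A)
  exact ⟨∑ f ∈ s, f ∘ₗ LinearMap.mulRight R (x f), by simpa using hs⟩

section BimoduleCenter

variable (R A M : Type*) [CommRing R] [Ring A] [Algebra R A] [AddCommGroup M] [Module R M]

def bimoduleCenter : Submodule R (A ⊗[R] M) where
  carrier := {x | ∀ a : A, a • x = op a • x}
  add_mem' hx hy a := by simp only [smul_add, hx a, hy a]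
  zero_mem' a := by simp only [smul_zero]
  smul_mem' r x hx a := by rw [smul_comm a r x, hx a, smul_comm]

def toBimoduleCenter : M →ₗ[R] bimoduleCenter R A M :=
  (TensorProduct.mk R A M 1).codRestrict _ fun m a => by
    simp [smul_tmul', MulOpposite.smul_eq_mul_unop]

variable {R A M}

@[simp]
theorem coe_toBimoduleCenter (m : M) : (toBimoduleCenter R A M m : A ⊗[R] M) = 1 ⊗ₜ m :=
  rfl

theorem mem_bimoduleCenter {x : A ⊗[R] M} :
    x ∈ bimoduleCenter R A M ↔ ∀ a : A, a • x = op a • x :=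
  Iff.rfl

theorem rTensor_mulLeftRight_apply_of_mem (u : A ⊗[R] Aᵐᵒᵖ) {x : A ⊗[R] M}
    (hx : x ∈ bimoduleCenter R A M) :
    (mulLeftRight R A u).rTensor M x = mulLeftRight R A u 1 • x := by
  induction u using TensorProduct.induction_on with
  | zero => simp
  | tmul a b =>
    have h : ∀ y : A ⊗[R] M, (mulLeftRight R A (a ⊗ₜ b)).rTensor M y = a • b • y := by
      intro y
      induction y using TensorProduct.induction_on with
      | zero => simp
      | tmul c m => simp [mulLeftRight, smul_tmul', MulOpposite.smul_eq_mul_unop]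
      | add y z hy hz => simp only [map_add, hy, hz, smul_add]
    rw [h, ← op_unop b, ← hx, smul_smul]
    simp [mulLeftRight]
  | add u v hu hv =>
    simp only [map_add, LinearMap.rTensor_add, LinearMap.add_apply, hu, hv, add_smul]

theorem eq_one_tmul_of_mem_bimoduleCenter (hsurj : Function.Surjective (mulLeftRight R A))
    {τ : A →ₗ[R] R} (hτ : τ 1 = 1) {x : A ⊗[R] M} (hx : x ∈ bimoduleCenter R A M) :
    x = (1 : A) ⊗ₜ TensorProduct.lid R M (τ.rTensor M x) := by
  obtain ⟨u, hu⟩ := hsurj (Algebra.linearMap R A ∘ₗ τ)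
  have key := rTensor_mulLeftRight_apply_of_mem u hx
  rw [hu, LinearMap.comp_apply, hτ, Algebra.linearMap_apply, map_one, one_smul,
    LinearMap.rTensor_comp_apply] at key
  conv_lhs => rw [← key]
  induction τ.rTensor M x using TensorProduct.induction_on with
  | zero => simp
  | tmul r m => simp [Algebra.algebraMap_eq_smul_one, smul_tmul]
  | add y z hy hz => simp only [map_add, hy, hz, tmul_add]

theorem bijective_toBimoduleCenter (hsurj : Function.Surjective (mulLeftRight R A))
    {τ : A →ₗ[R] R} (hτ : τ 1 = 1) : Function.Bijective (toBimoduleCenter R A M) := by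
  let ρ (x : bimoduleCenter R A M) : M := TensorProduct.lid R M (τ.rTensor M x)
  refine Function.bijective_iff_has_inverse.mpr ⟨ρ, fun m => by simp [ρ, hτ], fun x => ?_⟩
  exact Subtype.ext (eq_one_tmul_of_mem_bimoduleCenter hsurj hτ x.2).symm

variable {N : Type*} [AddCommGroup N] [Module R N]

def bimoduleCenterCongr (ψ : A ⊗[R] M ≃+ A ⊗[R] N) (hl : ∀ (a : A) x, ψ (a • x) = a • ψ x)
    (hr : ∀ (a : A) x, ψ (op a • x) = op a • ψ x) :
    bimoduleCenter R A M ≃ₗ[R] bimoduleCenter R A N :=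
  (ψ.toLinearEquiv fun r x => by rw [← algebraMap_smul A r x, hl, algebraMap_smul]).ofSubmodules
    _ _ <| by
      ext y
      rw [Submodule.mem_map_equiv, mem_bimoduleCenter, mem_bimoduleCenter]
      refine forall_congr' fun a => ?_
      rw [← ψ.injective.eq_iff]
      simp [hl, hr]

theorem IsAzumayaAlg.nonempty_linearEquiv_of_bimodule_addEquiv (hA : IsAzumayaAlg R A)
    (ψ : A ⊗[R] M ≃+ A ⊗[R] N) (hl : ∀ (a : A) x, ψ (a • x) = a • ψ x)
    (hr : ∀ (a : A) x, ψ (op a • x) = op a • ψ x) : Nonempty (M ≃ₗ[R] N) := by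
  have := hA.finite
  have := hA.projective
  have := hA.faithful
  obtain ⟨τ, hτ⟩ := exists_linearMap_apply_one_eq_one R A
  exact ⟨(LinearEquiv.ofBijective _ (bijective_toBimoduleCenter hA.bij.2 hτ)) ≪≫ₗ
    bimoduleCenterCongr ψ hl hr ≪≫ₗ
    (LinearEquiv.ofBijective _ (bijective_toBimoduleCenter hA.bij.2 hτ)).symm⟩

end BimoduleCenter

theorem TensorProduct.rid_smul {R A : Type*} [CommRing R] [Ring A] [Algebra R A] (a : A)
    (x : A ⊗[R] R) : TensorProduct.rid R A (a • x) = a * TensorProduct.rid R A x := by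
  induction x using TensorProduct.induction_on with
  | zero => simp
  | tmul c r => simp [smul_tmul']
  | add x y hx hy => simp only [smul_add, map_add, hx, hy, mul_add]

theorem TensorProduct.rid_op_smul {R A : Type*} [CommRing R] [Ring A] [Algebra R A] (a : A)
    (x : A ⊗[R] R) : TensorProduct.rid R A (op a • x) = TensorProduct.rid R A x * a := by
  induction x using TensorProduct.induction_on with
  | zero => simp
  | tmul c r => simp [smul_tmul', MulOpposite.smul_eq_mul_unop]
  | add x y hx hy => simp only [smul_add, map_add, hx, hy, add_mul]

/-- There is an isomorphism of `A`-bimodules `A ≅ A ⊗[R] M` (an additive equivalence commuting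
with both the left and right `A`-actions) if and only if `M ≅ R` as `R`-modules. -/
theorem stmt7 (R : Type*) [CommRing R] (A : Type*) [Ring A] [Algebra R A]
    (hA : IsAzumayaAlg R A) (M : Type*) [AddCommGroup M] [Module R M] :
    (∃ ψ : A ≃+ A ⊗[R] M, (∀ a x : A, ψ (a * x) = a • ψ x) ∧
        (∀ a x : A, ψ (x * a) = op a • ψ x)) ↔ Nonempty (M ≃ₗ[R] R) := by
  constructor
  · rintro ⟨ψ, hl, hr⟩
    obtain ⟨e⟩ := hA.nonempty_linearEquiv_of_bimodule_addEquiv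
      ((TensorProduct.rid R A).toAddEquiv.trans ψ)
      (fun a x => by simp [TensorProduct.rid_smul, hl])
      (fun a x => by simp [TensorProduct.rid_op_smul, hr])
    exact ⟨e.symm⟩
  · rintro ⟨e⟩
    let L : A ≃ₗ[R] A ⊗[R] M := (TensorProduct.rid R A).symm ≪≫ₗ (e.symm.lTensor A)
    have hL : ∀ a : A, L a = a ⊗ₜ e.symm 1 := fun a => by simp [L]
    refine ⟨L.toAddEquiv, fun a x => ?_, fun a x => ?_⟩
    · simp [hL, smul_tmul']
    · simp [hL, smul_tmul', MulOpposite.smul_eq_mul_unop]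
end

section
/- Let R be a Noetherian commutative ring, A an Azumaya algebra over R, and M a finitely generated R-module. The functor T_M = (- ⊗[R] M) on the category of finitely generated right A-modules is naturally isomorphic to the identity functor if and only if M is isomorphic to R as an R-module. -/
open TensorProduct MulOpposite

/-- `A` is an Azumaya algebra over the commutative ring `R`: it is a faithful finitely
generated projective `R`-module and `A ⊗[R] Aᵐᵒᵖ → End_R(A)`, `a ⊗ b ↦ (x ↦ a·x·b)`,
is bijective. -/
structure IsAzumaya' (R A : Type*) [CommRing R] [Ring A] [Algebra R A] : Prop where
  finite : Module.Finite R A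
  projective : Module.Projective R A
  faithful : FaithfulSMul R A
  bij : Function.Bijective (mulLeftRight R A)


/-! Given a natural isomorphism `ε : id ≅ - ⊗[R] M`, its component `E : Aᵐᵒᵖ ≃ Aᵐᵒᵖ ⊗[R] M` commutes with
left multiplications (it is `Aᵐᵒᵖ`-linear) and with right multiplications (naturality), hence, `A`
being Azumaya, with every `R`-linear endomorphism `φ` of `Aᵐᵒᵖ`, in the sense that
`E ∘ φ = (φ ⊗ 1) ∘ E`. Since `Aᵐᵒᵖ` is faithful, finitely generated and projective, its trace ideal
is `R`: `∑ ψᵢ(bᵢ) = 1` for some functionals `ψᵢ` and elements `bᵢ`. Applying the commutation to the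
rank-one maps `ψᵢ(-) x` shows that `E x = x ⊗ m₀` for a fixed `m₀ : M`, i.e. `E` is the base change
of `R → M, r ↦ r • m₀` along `Aᵐᵒᵖ`, which is faithfully flat; so `r ↦ r • m₀` is bijective. -/

theorem Ideal.eq_top_of_smul_top_eq_top {R P : Type*} [CommRing R] [AddCommGroup P] [Module R P]
    [Module.Finite R P] [FaithfulSMul R P] {I : Ideal R} (h : I • (⊤ : Submodule R P) = ⊤) :
    I = ⊤ := by
  obtain ⟨r, hr, hr0⟩ :=
    Submodule.exists_sub_one_mem_and_smul_eq_zero_of_fg_of_le_smul I ⊤ Module.Finite.fg_top h.ge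
  obtain rfl : r = 0 := eq_of_smul_eq_smul fun p => by rw [hr0 p trivial, zero_smul]
  rw [zero_sub, neg_mem_iff] at hr
  exact I.eq_top_of_isUnit_mem hr isUnit_one

instance Module.FaithfullyFlat.of_projective_of_faithfulSMul {R P : Type*} [CommRing R]
    [AddCommGroup P] [Module R P] [Module.Finite R P] [Module.Projective R P]
    [FaithfulSMul R P] : Module.FaithfullyFlat R P :=
  (Module.FaithfullyFlat.iff_flat_and_ideal_smul_eq_top R P).2
    ⟨inferInstance, fun _ => Ideal.eq_top_of_smul_top_eq_top⟩

theorem Module.Projective.exists_sum_apply_eq_one (R P : Type*) [CommRing R]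
    [AddCommGroup P] [Module R P] [Module.Finite R P] [Module.Projective R P]
    [FaithfulSMul R P] :
    ∃ (n : ℕ) (ψ : Fin n → Module.Dual R P) (b : Fin n → P), ∑ i, ψ i (b i) = 1 := by
  obtain ⟨s, hs⟩ := (Module.projective_def' (R := R) (P := P)).1 inferInstance
  set T : Ideal R := Ideal.span (Set.range fun q : Module.Dual R P × P => q.1 q.2)
  have hT : T • (⊤ : Submodule R P) = ⊤ := by
    refine eq_top_iff.2 fun p _ => ?_
    rw [← LinearMap.id_apply (R := R) p, ← hs, LinearMap.comp_apply,
      Finsupp.linearCombination_apply]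
    refine Submodule.finsuppSum_mem _ _ _ _ fun q _ => Submodule.smul_mem_smul ?_ trivial
    exact Ideal.subset_span ⟨(Finsupp.lapply q ∘ₗ s, p), rfl⟩
  obtain ⟨n, c, g, hg⟩ :=
    Submodule.mem_span_set'.1 ((Ideal.eq_top_of_smul_top_eq_top hT).ge trivial)
  choose q hq using fun i => (g i).2
  exact ⟨n, fun i => c i • (q i).1, fun i => (q i).2, by simpa [hq] using hg⟩

section Intertwiners

variable {R P M : Type*} [CommRing R] [AddCommGroup P] [Module R P] [AddCommGroup M] [Module R M]

def rTensorIntertwiners (E : P →ₗ[R] P ⊗[R] M) : Subalgebra R (Module.End R P) where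
  carrier := {φ | E ∘ₗ φ = φ.rTensor M ∘ₗ E}
  mul_mem' {φ χ} hφ hχ := by
    simp only [Set.mem_ofPred_eq, Module.End.mul_eq_comp, LinearMap.rTensor_comp] at *
    rw [← LinearMap.comp_assoc, hφ, LinearMap.comp_assoc, hχ, LinearMap.comp_assoc]
  add_mem' {φ χ} hφ hχ := by
    simp only [Set.mem_ofPred_eq, LinearMap.comp_add, LinearMap.rTensor_add,
      LinearMap.add_comp] at *
    rw [hφ, hχ]
  algebraMap_mem' r := by
    ext x
    simp [Algebra.algebraMap_eq_smul_one, LinearMap.rTensor_smul, Module.End.one_eq_id]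

theorem mem_rTensorIntertwiners {E : P →ₗ[R] P ⊗[R] M} {φ : Module.End R P} :
    φ ∈ rTensorIntertwiners E ↔ E ∘ₗ φ = φ.rTensor M ∘ₗ E := Iff.rfl

theorem rTensor_smulRight_apply (ψ : Module.Dual R P) (x : P) (w : P ⊗[R] M) :
    (ψ.smulRight x).rTensor M w = x ⊗ₜ TensorProduct.lid R M (ψ.rTensor M w) := by
  induction w using TensorProduct.induction_on with
  | zero => simp
  | tmul y m => simp [TensorProduct.smul_tmul]
  | add y z hy hz => rw [map_add, map_add, map_add, hy, hz, TensorProduct.tmul_add]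

theorem exists_eq_tmul_of_rTensorIntertwiners_eq_top {n : ℕ} {ψ : Fin n → Module.Dual R P}
    {b : Fin n → P} (hψb : ∑ i, ψ i (b i) = 1) {E : P →ₗ[R] P ⊗[R] M}
    (hE : rTensorIntertwiners E = ⊤) : ∃ m₀ : M, ∀ x, E x = x ⊗ₜ m₀ := by
  refine ⟨∑ i, TensorProduct.lid R M ((ψ i).rTensor M (E (b i))), fun x => ?_⟩
  have hcomm (φ : Module.End R P) (y : P) : E (φ y) = φ.rTensor M (E y) :=
    LinearMap.congr_fun (mem_rTensorIntertwiners.1 (hE ▸ Algebra.mem_top : φ ∈ _)) y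
  calc E x = ∑ i, E ((ψ i).smulRight x (b i)) := by
        simp only [LinearMap.smulRight_apply, map_smul, ← Finset.sum_smul, hψb, one_smul]
    _ = _ := by simp only [hcomm, rTensor_smulRight_apply, TensorProduct.tmul_sum]

theorem nonempty_linearEquiv_of_rTensorIntertwiners_eq_top [Module.Finite R P]
    [Module.Projective R P] [FaithfulSMul R P] (E : P ≃ₗ[R] P ⊗[R] M)
    (hE : rTensorIntertwiners E.toLinearMap = ⊤) : Nonempty (M ≃ₗ[R] R) := by
  obtain ⟨n, ψ, b, hψb⟩ := Module.Projective.exists_sum_apply_eq_one R P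
  obtain ⟨m₀, hm₀⟩ := exists_eq_tmul_of_rTensorIntertwiners_eq_top hψb hE
  have hE' : (LinearMap.toSpanSingleton R M m₀).lTensor P =
      E.toLinearMap ∘ₗ (TensorProduct.rid R P).toLinearMap :=
    TensorProduct.ext' fun x r => by
      simp [TensorProduct.smul_tmul, show ∀ x, E x = x ⊗ₜ m₀ from hm₀]
  have hbij : Function.Bijective (LinearMap.toSpanSingleton R M m₀) := by
    rw [← Module.FaithfullyFlat.lTensor_bijective_iff_bijective R P, hE']
    exact E.bijective.comp (TensorProduct.rid R P).bijective
  exact ⟨(LinearEquiv.ofBijective _ hbij).symm⟩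

end Intertwiners

theorem span_mulLeft_comp_mulRight_eq_top {R A : Type*} [CommRing R] [Ring A] [Algebra R A]
    (h : Function.Surjective (mulLeftRight R A)) :
    Submodule.span R (Set.range fun p : Aᵐᵒᵖ × Aᵐᵒᵖ =>
      LinearMap.mulLeft R p.1 ∘ₗ LinearMap.mulRight R p.2) = ⊤ := by
  let u : A ≃ₗ[R] Aᵐᵒᵖ := opLinearEquiv R
  have hF : Function.Surjective (u.conj.toLinearMap ∘ₗ mulLeftRight R A) :=
    u.conj.surjective.comp h
  rw [eq_top_iff, ← LinearMap.range_eq_top.2 hF, LinearMap.range_eq_map,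
    ← TensorProduct.span_tmul_eq_top, Submodule.map_span]
  refine Submodule.span_mono ?_
  rintro _ ⟨_, ⟨a, b, rfl⟩, rfl⟩
  exact ⟨(b, op a), by ext x; simp [u, mulLeftRight, mul_assoc]⟩

theorem smul_eq_rTensor_mulLeft {R B M : Type*} [CommRing R] [Ring B] [Algebra R B]
    [AddCommGroup M] [Module R M] (c : B) (w : B ⊗[R] M) :
    c • w = (LinearMap.mulLeft R c).rTensor M w := by
  induction w using TensorProduct.induction_on with
  | zero => simp
  | tmul x m => simp [TensorProduct.smul_tmul']
  | add x y hx hy => rw [smul_add, map_add, hx, hy]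

theorem rTensorIntertwiners_eq_top_of_surjective_mulLeftRight {R A M : Type*} [CommRing R]
    [Ring A] [Algebra R A] [AddCommGroup M] [Module R M]
    (h : Function.Surjective (mulLeftRight R A)) (E : Aᵐᵒᵖ →ₗ[Aᵐᵒᵖ] Aᵐᵒᵖ ⊗[R] M)
    (hE : ∀ a y, E (y * a) = (LinearMap.mulRight R a).rTensor M (E y)) :
    rTensorIntertwiners (E.restrictScalars R) = ⊤ := by
  refine eq_top_iff.2 fun φ _ => ?_
  refine (Subalgebra.mem_toSubmodule _).1 <|
    (Submodule.span_le (p := Subalgebra.toSubmodule _)).2 ?_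
      ((span_mulLeft_comp_mulRight_eq_top h).ge trivial)
  rintro _ ⟨⟨c, a⟩, rfl⟩
  refine Subalgebra.mul_mem _ (x := LinearMap.mulLeft R c) (y := LinearMap.mulRight R a) ?_ ?_
  · ext y
    simp [← smul_eq_mul, smul_eq_rTensor_mulLeft]
  · ext y
    exact hE a y

theorem stmt10_general (R : Type u) [CommRing R]
    (A : Type u) [Ring A] [Algebra R A] (hA : IsAzumaya' R A)
    (M : Type u) [AddCommGroup M] [Module R M] :
    (∃ ε : ∀ (N : Type u) [AddCommGroup N] [Module R N] [Module Aᵐᵒᵖ N]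
        [IsScalarTower R Aᵐᵒᵖ N] [Module.Finite Aᵐᵒᵖ N], N ≃ₗ[Aᵐᵒᵖ] N ⊗[R] M,
      ∀ (N : Type u) [AddCommGroup N] [Module R N] [Module Aᵐᵒᵖ N] [IsScalarTower R Aᵐᵒᵖ N]
        [Module.Finite Aᵐᵒᵖ N]
        (N' : Type u) [AddCommGroup N'] [Module R N'] [Module Aᵐᵒᵖ N']
        [IsScalarTower R Aᵐᵒᵖ N'] [Module.Finite Aᵐᵒᵖ N']
        (f : N →ₗ[Aᵐᵒᵖ] N') (n : N),
        ε N' (f n) = LinearMap.rTensor M (f.restrictScalars R) (ε N n)) ↔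
    Nonempty (M ≃ₗ[R] R) := by
  constructor
  · rintro ⟨ε, hε⟩
    have := hA.finite
    have := hA.faithful
    have := hA.projective
    have : Module.Projective R Aᵐᵒᵖ := .of_equiv (opLinearEquiv R)
    exact nonempty_linearEquiv_of_rTensorIntertwiners_eq_top ((ε Aᵐᵒᵖ).restrictScalars R)
      (rTensorIntertwiners_eq_top_of_surjective_mulLeftRight hA.bij.2 (ε Aᵐᵒᵖ).toLinearMap
        fun a y => hε _ _ (LinearMap.mulRight Aᵐᵒᵖ a) y)
  · rintro ⟨e⟩
    refine ⟨fun N _ _ _ _ _ => (AlgebraTensorModule.rid R Aᵐᵒᵖ N).symm ≪≫ₗ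
      AlgebraTensorModule.congr (LinearEquiv.refl Aᵐᵒᵖ N) e.symm, ?_⟩
    intro N _ _ _ _ _ N' _ _ _ _ _ f n
    simp

/-- Let `R` be Noetherian and `M` a finitely generated `R`-module. The functor
`T_M = - ⊗[R] M` on the category of finitely generated right `A`-modules (formalized as
finitely generated `Aᵐᵒᵖ`-modules whose `R`-action factors through `Aᵐᵒᵖ`) is naturally
isomorphic to the identity functor if and only if `M ≅ R` as `R`-modules. -/
theorem stmt10 (R : Type u) [CommRing R] [IsNoetherianRing R]
    (A : Type u) [Ring A] [Algebra R A] (hA : IsAzumaya' R A)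
    (M : Type u) [AddCommGroup M] [Module R M] [Module.Finite R M] :
    (∃ ε : ∀ (N : Type u) [AddCommGroup N] [Module R N] [Module Aᵐᵒᵖ N]
        [IsScalarTower R Aᵐᵒᵖ N] [Module.Finite Aᵐᵒᵖ N], N ≃ₗ[Aᵐᵒᵖ] N ⊗[R] M,
      ∀ (N : Type u) [AddCommGroup N] [Module R N] [Module Aᵐᵒᵖ N] [IsScalarTower R Aᵐᵒᵖ N]
        [Module.Finite Aᵐᵒᵖ N]
        (N' : Type u) [AddCommGroup N'] [Module R N'] [Module Aᵐᵒᵖ N']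
        [IsScalarTower R Aᵐᵒᵖ N'] [Module.Finite Aᵐᵒᵖ N']
        (f : N →ₗ[Aᵐᵒᵖ] N') (n : N),
        ε N' (f n) = LinearMap.rTensor M (f.restrictScalars R) (ε N n)) ↔
    Nonempty (M ≃ₗ[R] R) :=
  stmt10_general R A hA M
end
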